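/- Let S be a semigroup that is the disjoint union of free monogenic subsemigroups ⟨a⟩, ⟨b⟩, ⟨c⟩, with ab = ba = a^i (for some i ≥ 1). If ac ∈ ⟨c⟩ then bc ∈ ⟨c⟩, and if ca ∈ ⟨c⟩ then cb ∈ ⟨c⟩. -/

import Mathlib

/-!
The hypothesis `ac ∈ ⟨c⟩` makes `⟨c⟩` stable under left multiplication by `⟨a⟩`, and `ab ∈ ⟨a⟩`
makes `⟨a⟩` stable under right multiplication by `⟨b⟩`. Hence `a(bc) = (ab)c ∈ ⟨c⟩`, while
`bc ∈ ⟨a⟩ ∪ ⟨b⟩` would put `a(bc)` into `⟨a⟩`, which is disjoint from `⟨c⟩`. The second claim is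
the first one in the opposite semigroup, where it reads `(cb)a = c(ba)`.
-/

/-- `pw a n` is `a ^ n` for `n ≥ 1` (with junk value `a` at `n = 0`),
defined in any magma. -/
def pw {S : Type*} [Mul S] (a : S) : ℕ → S
  | 0 => a
  | 1 => a
  | n + 2 => pw a (n + 1) * a

/-- The monogenic subsemigroup `⟨a⟩ = {a^n : n ≥ 1}`. -/
def genSet {S : Type*} [Mul S] (a : S) : Set S := {x | ∃ n, 1 ≤ n ∧ pw a n = x}

/-- `a` has infinite order: its positive powers are pairwise distinct,
i.e. `⟨a⟩` is free monogenic. -/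
def InfOrder {S : Type*} [Mul S] (a : S) : Prop :=
  ∀ m n : ℕ, 1 ≤ m → 1 ≤ n → pw a m = pw a n → m = n

open Subsemigroup MulOpposite

section Powers

variable {S : Type*} [Semigroup S]

theorem pw_succ (a : S) {n : ℕ} (hn : 1 ≤ n) : pw a (n + 1) = pw a n * a := by
  obtain ⟨m, rfl⟩ := Nat.exists_eq_add_of_le' hn
  rfl

theorem pw_add (a : S) {m n : ℕ} (hm : 1 ≤ m) (hn : 1 ≤ n) :
    pw a (m + n) = pw a m * pw a n := by
  induction n, hn using Nat.le_induction with
  | base => exact pw_succ a hm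
  | succ n hn ih =>
    rw [← add_assoc, pw_succ a (by omega), ih, pw_succ a hn, mul_assoc]

theorem pw_mem_closure (a : S) {n : ℕ} (hn : 1 ≤ n) : pw a n ∈ closure {a} := by
  induction n, hn using Nat.le_induction with
  | base => exact subset_closure rfl
  | succ n hn ih => exact pw_succ a hn ▸ mul_mem ih (subset_closure rfl)

theorem genSet_eq_closure (a : S) : genSet a = closure {a} := by
  apply Set.Subset.antisymm
  · rintro _ ⟨n, hn, rfl⟩
    exact pw_mem_closure a hn
  · intro x hx
    induction hx using closure_induction with
    | mem x hx => exact ⟨1, le_rfl, hx.symm⟩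
    | mul _ _ _ _ hx hy =>
      obtain ⟨m, hm, rfl⟩ := hx
      obtain ⟨n, hn, rfl⟩ := hy
      exact ⟨m + n, by omega, pw_add a hm hn⟩

end Powers

section Closure

variable {S : Type*} [Semigroup S]

theorem mul_mem_closure_of_forall_mul_mem {s t : Set S}
    (h : ∀ x ∈ t, ∀ y ∈ s, x * y ∈ closure s) {x y : S} (hx : x ∈ closure t)
    (hy : y ∈ closure s) : x * y ∈ closure s := by
  induction hx using closure_induction generalizing y with
  | mem x hx =>
    induction hy using closure_induction with
    | mem y hy => exact h x hx y hy
    | mul y z _ hz hxy _ => exact mul_assoc x y z ▸ mul_mem hxy hz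
  | mul x₁ x₂ _ _ h₁ h₂ => exact (mul_assoc x₁ x₂ y).symm ▸ h₁ (h₂ hy)

theorem mul_mem_closure_of_forall_mul_mem' {s t : Set S}
    (h : ∀ x ∈ t, ∀ y ∈ s, y * x ∈ closure s) {x y : S} (hx : x ∈ closure t)
    (hy : y ∈ closure s) : y * x ∈ closure s := by
  induction hx using closure_induction generalizing y with
  | mem x hx =>
    induction hy using closure_induction with
    | mem y hy => exact h x hx y hy
    | mul y z hy _ _ hzx => exact (mul_assoc y z x).symm ▸ mul_mem hy hzx
  | mul x₁ x₂ _ _ h₁ h₂ => exact mul_assoc y x₁ x₂ ▸ h₂ (h₁ hy)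

theorem mul_mem_closure_singleton_of_disjoint {a b c : S}
    (hac : Disjoint (closure {a} : Set S) (closure {c}))
    (hcover : b * c ∈ (closure {a} ∪ closure {b} ∪ closure {c} : Set S))
    (hab : a * b ∈ closure {a}) (h : a * c ∈ closure {c}) : b * c ∈ closure {c} := by
  have hc : a * (b * c) ∈ closure {c} := by
    rw [← mul_assoc]
    exact mul_mem_closure_of_forall_mul_mem (by simpa using h) hab (subset_closure rfl)
  rcases hcover with (hbc | hbc) | hbc
  · exact absurd hc (Set.disjoint_left.mp hac (mul_mem (subset_closure rfl) hbc))
  · have ha : a * (b * c) ∈ closure {a} :=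
      mul_mem_closure_of_forall_mul_mem' (by simpa using hab) hbc (subset_closure rfl)
    exact absurd hc (Set.disjoint_left.mp hac ha)
  · exact hbc

theorem coe_closure_singleton_op (a : S) :
    (closure {op a} : Set Sᵐᵒᵖ) = unop ⁻¹' closure {a} := by
  rw [← coe_op, op_closure]
  congr 2
  exact Set.ext fun _ => unop_injective.eq_iff.symm

theorem mul_mem_closure_singleton_of_disjoint' {a b c : S}
    (hac : Disjoint (closure {a} : Set S) (closure {c}))
    (hcover : c * b ∈ (closure {a} ∪ closure {b} ∪ closure {c} : Set S))
    (hba : b * a ∈ closure {a}) (h : c * a ∈ closure {c}) : c * b ∈ closure {c} := by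
  have := mul_mem_closure_singleton_of_disjoint (a := op a) (b := op b) (c := op c)
  simp only [← SetLike.mem_coe, coe_closure_singleton_op] at this
  exact this (hac.preimage _) hcover hba h

end Closure

theorem stmt_11_general {S : Type*} [Semigroup S] (a b c : S)
    (hac : genSet a ∩ genSet c = ∅)
    (hcover : genSet a ∪ genSet b ∪ genSet c = Set.univ)
    (i : ℕ) (hi : 1 ≤ i) (h1 : a * b = pw a i) (h2 : b * a = pw a i) :
    (a * c ∈ genSet c → b * c ∈ genSet c) ∧ (c * a ∈ genSet c → c * b ∈ genSet c) := by
  simp only [genSet_eq_closure, ← Set.disjoint_iff_inter_eq_empty] at hac hcover ⊢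
  have hpow := pw_mem_closure a hi
  exact ⟨mul_mem_closure_singleton_of_disjoint hac (hcover ▸ trivial) (h1 ▸ hpow),
    mul_mem_closure_singleton_of_disjoint' hac (hcover ▸ trivial) (h2 ▸ hpow)⟩

theorem stmt_11 {S : Type*} [Semigroup S] (a b c : S)
    (ha : InfOrder a) (hb : InfOrder b) (hc : InfOrder c)
    (hab : genSet a ∩ genSet b = ∅) (hac : genSet a ∩ genSet c = ∅)
    (hbc : genSet b ∩ genSet c = ∅)
    (hcover : genSet a ∪ genSet b ∪ genSet c = Set.univ)
    (i : ℕ) (hi : 1 ≤ i) (h1 : a * b = pw a i) (h2 : b * a = pw a i) :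
    (a * c ∈ genSet c → b * c ∈ genSet c) ∧ (c * a ∈ genSet c → c * b ∈ genSet c) :=
  stmt_11_general a b c hac hcover i hi h1 h2
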